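/- Let ψ⁺ be a forward stationary solution, let N ∈ ℕ and φ ∈ C(𝕋^d), and define Q^N(x, n) = K_{−N,n}φ(x) − ψ⁺(x, n) for integers −N ≤ n ≤ 0 (with K_{−N,−N}φ = φ). If γ is a minimizer for K_{−N,0}φ at γ(0), then Q^N(γ(j), j) ≤ Q^N(γ(k), k) for all integers −N ≤ j < k ≤ 0. -/

import Mathlib

open MeasureTheory

noncomputable section

/-- Euclidean space ℝ^d. -/
abbrev V (d : ℕ) := EuclideanSpace ℝ (Fin d)

/-- The torus 𝕋^d = ℝ^d/ℤ^d, as a product of circles, with its quotient distance. -/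
abbrev Torus (d : ℕ) := Fin d → AddCircle (1 : ℝ)

/-- The canonical projection ℝ^d → 𝕋^d. -/
def projT {d : ℕ} (x : V d) : Torus d := fun i => (x i : AddCircle (1 : ℝ))

/-- `ζ` is an absolutely continuous curve on `[s,t]` with (square-integrable)
derivative `g`. -/
def IsAC {d : ℕ} (ζ g : ℝ → V d) (s t : ℝ) : Prop :=
  IntegrableOn g (Set.Icc s t) ∧ IntegrableOn (fun τ => ‖g τ‖ ^ 2) (Set.Icc s t) ∧
    ∀ τ ∈ Set.Icc s t, ζ τ = ζ s + ∫ u in s..τ, g u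

/-- The action 𝔸(ζ) = ∫_s^t (½|ζ̇|² − b·ζ̇) dτ − Σ_{s ≤ j < t} F_j(ζ(j)) of the curve `ζ`
with derivative `g`, for the kicked potentials `F`. -/
def action {d : ℕ} (F : ℤ → Torus d → ℝ) (b : V d) (ζ g : ℝ → V d) (s t : ℝ) : ℝ :=
  (∫ τ in s..t, ((1 : ℝ) / 2 * ‖g τ‖ ^ 2 - (inner ℝ b (g τ) : ℝ))) -
    ∑ j ∈ Finset.Ico ⌈s⌉ ⌈t⌉, F j (projT (ζ (j : ℝ)))

/-- The action function A_{s,t}(x,x') = inf over absolutely continuous curves from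
`x` to `x'`. -/
def actFn {d : ℕ} (F : ℤ → Torus d → ℝ) (b : V d) (s t : ℝ) (x x' : Torus d) : ℝ :=
  sInf {a | ∃ ζ g : ℝ → V d, IsAC ζ g s t ∧ projT (ζ s) = x ∧ projT (ζ t) = x' ∧
    action F b ζ g s t = a}

/-- The backward Lax–Oleinik operator K_{s,t}φ(x) = min_y (φ(y) + A_{s,t}(y,x)), with
the convention K_{s,s}φ = φ. -/
def KOp {d : ℕ} (F : ℤ → Torus d → ℝ) (b : V d) (s t : ℝ) (φ : Torus d → ℝ) :
    Torus d → ℝ :=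
  if s < t then fun x => sInf {a | ∃ y : Torus d, a = φ y + actFn F b s t y x} else φ

/-- The forward Lax–Oleinik operator Ǩ_{s,t}φ(x) = max_y (φ(y) − A_{s,t}(x,y)), with
the convention Ǩ_{s,s}φ = φ. -/
def KChk {d : ℕ} (F : ℤ → Torus d → ℝ) (b : V d) (s t : ℝ) (φ : Torus d → ℝ) :
    Torus d → ℝ :=
  if s < t then fun x => sSup {a | ∃ y : Torus d, a = φ y - actFn F b s t x y} else φ

/-- The seminorm ‖ψ‖_* = min_C sup_x |ψ(x) − C|. -/
def starNorm {d : ℕ} (ψ : Torus d → ℝ) : ℝ := ⨅ C : ℝ, ⨆ x : Torus d, |ψ x - C|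

/-- A minimizer for `K_{m,n}φ` at its terminal point `ζ(n)`. -/
def IsMinimizer {d : ℕ} (F : ℤ → Torus d → ℝ) (b : V d) (m n : ℤ) (φ : Torus d → ℝ)
    (ζ g : ℝ → V d) : Prop :=
  IsAC ζ g m n ∧
    KOp F b m n φ (projT (ζ (n : ℝ))) = φ (projT (ζ (m : ℝ))) + action F b ζ g m n

/-- A curve attaining `Ǩ_{m,n}φ` at its initial point `ζ(m)`. -/
def IsMaximizer {d : ℕ} (F : ℤ → Torus d → ℝ) (b : V d) (m n : ℤ) (φ : Torus d → ℝ)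
    (ζ g : ℝ → V d) : Prop :=
  IsAC ζ g m n ∧
    KChk F b m n φ (projT (ζ (m : ℝ))) = φ (projT (ζ (n : ℝ))) - action F b ζ g m n

/-- A backward stationary solution. -/
def IsBackwardSol {d : ℕ} (F : ℤ → Torus d → ℝ) (b : V d) (ψ : Torus d → ℤ → ℝ) : Prop :=
  (∀ n : ℤ, Continuous fun x => ψ x n) ∧
    ∀ m n : ℤ, m < n → ∀ x, KOp F b m n (fun y => ψ y m) x = ψ x n

/-- A forward stationary solution. -/
def IsForwardSol {d : ℕ} (F : ℤ → Torus d → ℝ) (b : V d) (ψ : Torus d → ℤ → ℝ) : Prop :=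
  (∀ n : ℤ, Continuous fun x => ψ x n) ∧
    ∀ m n : ℤ, m < n → ∀ x, KChk F b m n (fun y => ψ y n) x = ψ x m

/-- `ζ` is affine on each interval `[j-1, j]` with (left) velocity `v j`. -/
def AffineOnUnit {d : ℕ} (ζ : ℝ → V d) (v : ℤ → V d) (m n : ℤ) : Prop :=
  ∀ j : ℤ, m < j → j ≤ n → ∀ τ ∈ Set.Icc ((j : ℝ) - 1) (j : ℝ),
    ζ τ = ζ (j : ℝ) + (τ - (j : ℝ)) • v j


/-! Concatenating a competitor on `[-N, k]` with `γ|[k, 0]` shows that `K_{-N,·}φ` grows along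
the minimizer `γ` at least as fast as the action of `γ`:
`K_{-N,j}φ(γ j) + 𝔸(γ|[j,k]) ≤ K_{-N,k}φ(γ k)`. Conversely, `γ|[j,k]` is a competitor for
`Ǩ_{j,k}ψ⁺(·, k) = ψ⁺(·, j)` at `γ j`, so `ψ⁺(γ k, k) - 𝔸(γ|[j,k]) ≤ ψ⁺(γ j, j)`.
Subtracting the two inequalities gives the monotonicity of `Q^N` along `γ`. -/

open Set

variable {d : ℕ}

lemma isOpenQuotientMap_projT : IsOpenQuotientMap (projT : V d → Torus d) :=
  (IsOpenQuotientMap.piMap fun _ => QuotientAddGroup.isOpenQuotientMap_mk).comp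
    (PiLp.homeomorph 2 _).isOpenQuotientMap

lemma bddAbove_range_of_continuous_comp_projT {f : Torus d → ℝ}
    (hf : Continuous fun x : V d => f (projT x)) : BddAbove (range f) :=
  (isCompact_range (isOpenQuotientMap_projT.continuous_comp_iff.1 hf)).bddAbove

lemma projT_add (x y : V d) : projT (x + y) = projT x + projT y := rfl

lemma projT_sub (x y : V d) : projT (x - y) = projT x - projT y := rfl

lemma MeasureTheory.IntegrableOn.intervalIntegrable_of_mem_Icc {E : Type*}
    [NormedAddCommGroup E] {f : ℝ → E} {s t a c : ℝ} (hf : IntegrableOn f (Icc s t))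
    (ha : a ∈ Icc s t) (hc : c ∈ Icc s t) : IntervalIntegrable f volume a c :=
  (hf.mono_set (uIcc_subset_Icc ha hc)).intervalIntegrable

namespace IsAC

variable {ζ ζ' g g' : ℝ → V d} {s r t : ℝ}

lemma mono {s' t' : ℝ} (h : IsAC ζ g s t) (hs : s ≤ s') (ht : t' ≤ t) : IsAC ζ g s' t' := by
  have hsub : Icc s' t' ⊆ Icc s t := Icc_subset_Icc hs ht
  refine ⟨h.1.mono_set hsub, h.2.1.mono_set hsub, fun τ hτ => ?_⟩
  have hs' : s' ∈ Icc s t := hsub ⟨le_rfl, hτ.1.trans hτ.2⟩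
  have hs : s ∈ Icc s t := ⟨le_rfl, hs'.1.trans hs'.2⟩
  rw [h.2.2 τ (hsub hτ), h.2.2 s' hs', ← intervalIntegral.integral_interval_sub_left
    (h.1.intervalIntegrable_of_mem_Icc hs (hsub hτ)) (h.1.intervalIntegrable_of_mem_Icc hs hs')]
  abel

lemma congr (h : IsAC ζ g s t) (hζ : EqOn ζ ζ' (Icc s t)) (hg : EqOn g g' (Ioc s t)) :
    IsAC ζ' g' s t := by
  refine ⟨?_, ?_, fun τ hτ => ?_⟩
  · rw [integrableOn_Icc_iff_integrableOn_Ioc (f := g')]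
    exact (h.1.mono_set Ioc_subset_Icc_self).congr_fun hg measurableSet_Ioc
  · rw [integrableOn_Icc_iff_integrableOn_Ioc (f := fun τ => ‖g' τ‖ ^ 2)]
    exact (h.2.1.mono_set Ioc_subset_Icc_self).congr_fun
      (fun τ hτ => congrArg (‖·‖ ^ 2) (hg hτ)) measurableSet_Ioc
  · have hint : ∫ u in s..τ, g u = ∫ u in s..τ, g' u := by
      refine intervalIntegral.integral_congr_ae (Filter.Eventually.of_forall fun u hu => ?_)
      rw [uIoc_of_le hτ.1] at hu
      exact hg ⟨hu.1, hu.2.trans hτ.2⟩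
    rw [← hζ hτ, ← hζ ⟨le_rfl, hτ.1.trans hτ.2⟩, ← hint]
    exact h.2.2 τ hτ

lemma union (h₁ : IsAC ζ g s r) (h₂ : IsAC ζ g r t) (hsr : s ≤ r) : IsAC ζ g s t := by
  refine ⟨(h₁.1.union h₂.1).mono_set Icc_subset_Icc_union_Icc,
    (h₁.2.1.union h₂.2.1).mono_set Icc_subset_Icc_union_Icc, fun τ hτ => ?_⟩
  rcases le_or_gt τ r with hτr | hrτ
  · exact h₁.2.2 τ ⟨hτ.1, hτr⟩
  · rw [h₂.2.2 τ ⟨hrτ.le, hτ.2⟩, h₁.2.2 r ⟨hsr, le_rfl⟩, add_assoc,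
      intervalIntegral.integral_add_adjacent_intervals
        (h₁.1.intervalIntegrable_of_mem_Icc ⟨le_rfl, hsr⟩ ⟨hsr, le_rfl⟩)
        (h₂.1.intervalIntegrable_of_mem_Icc ⟨le_rfl, hrτ.le.trans hτ.2⟩ ⟨hrτ.le, hτ.2⟩)]

lemma add_const (h : IsAC ζ g s t) (m : V d) : IsAC (fun τ => ζ τ + m) g s t :=
  ⟨h.1, h.2.1, fun τ hτ => by beta_reduce; rw [h.2.2 τ hτ]; abel⟩

end IsAC

section Action

variable (F : ℤ → Torus d → ℝ) (b : V d) {ζ ζ' g g' : ℝ → V d} {s r t : ℝ}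

lemma action_congr (hst : s ≤ t) (hζ : EqOn ζ ζ' (Ico s t)) (hg : EqOn g g' (Ioc s t)) :
    action F b ζ g s t = action F b ζ' g' s t := by
  have hint := intervalIntegral.integral_congr_ae (μ := volume) (a := s) (b := t)
    (f := fun τ => (1 : ℝ) / 2 * ‖g τ‖ ^ 2 - inner ℝ b (g τ))
    (g := fun τ => (1 : ℝ) / 2 * ‖g' τ‖ ^ 2 - inner ℝ b (g' τ))
    (Filter.Eventually.of_forall fun τ hτ => by
      rw [uIoc_of_le hst] at hτ
      simp only [hg hτ])
  have hsum : ∀ j ∈ Finset.Ico ⌈s⌉ ⌈t⌉, F j (projT (ζ j)) = F j (projT (ζ' j)) := by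
    intro j hj
    rw [Finset.mem_Ico, Int.ceil_le, Int.lt_ceil] at hj
    rw [hζ hj]
  rw [action, action, hint, Finset.sum_congr rfl hsum]

lemma action_add_const {m : V d} (hm : projT m = 0) :
    action F b (fun τ => ζ τ + m) g s t = action F b ζ g s t := by
  simp only [action, projT_add, hm, add_zero]

lemma action_split (h : IsAC ζ g s t) (hsr : s ≤ r) (hrt : r ≤ t) :
    action F b ζ g s t = action F b ζ g s r + action F b ζ g r t := by
  have hint : IntegrableOn (fun τ => (1 : ℝ) / 2 * ‖g τ‖ ^ 2 - inner ℝ b (g τ)) (Icc s t) :=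
    (h.2.1.const_mul _).sub (h.1.const_inner b)
  have hs : s ∈ Icc s t := ⟨le_rfl, hsr.trans hrt⟩
  have hr : r ∈ Icc s t := ⟨hsr, hrt⟩
  have ht : t ∈ Icc s t := ⟨hsr.trans hrt, le_rfl⟩
  rw [action, action, action,
    ← intervalIntegral.integral_add_adjacent_intervals (hint.intervalIntegrable_of_mem_Icc hs hr)
      (hint.intervalIntegrable_of_mem_Icc hr ht),
    ← Finset.Ico_union_Ico_eq_Ico (Int.ceil_le_ceil hsr) (Int.ceil_le_ceil hrt),
    Finset.sum_union (Finset.Ico_disjoint_Ico_consecutive _ _ _)]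
  ring

/-- `ζ₁` is first translated by a lattice vector, so that the two curves meet in `ℝ^d` and not
only on the torus. -/
lemma exists_concat_of_projT_eq {ζ₁ g₁ ζ₂ g₂ : ℝ → V d} (hsr : s ≤ r) (hrt : r ≤ t)
    (h₁ : IsAC ζ₁ g₁ s r) (h₂ : IsAC ζ₂ g₂ r t) (hr : projT (ζ₁ r) = projT (ζ₂ r)) :
    ∃ ζ g : ℝ → V d, IsAC ζ g s t ∧ projT (ζ s) = projT (ζ₁ s) ∧ ζ t = ζ₂ t ∧
      action F b ζ g s t = action F b ζ₁ g₁ s r + action F b ζ₂ g₂ r t := by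
  set m := ζ₂ r - ζ₁ r
  have hm : projT m = 0 := by rw [projT_sub, hr, sub_self]
  let ζ := (Iic r).piecewise (fun τ => ζ₁ τ + m) ζ₂
  let g := (Iic r).piecewise g₁ g₂
  have hζ₁ : EqOn ζ (fun τ => ζ₁ τ + m) (Icc s r) :=
    (piecewise_eqOn _ _ _).mono Icc_subset_Iic_self
  have hζ₂ : EqOn ζ ζ₂ (Icc r t) := by
    intro τ hτ
    rcases hτ.1.eq_or_lt with rfl | hrτ
    · simp [ζ, m]
    · exact piecewise_eq_of_notMem _ _ _ hrτ.not_ge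
  have hg₁ : EqOn g g₁ (Ioc s r) := (piecewise_eqOn _ _ _).mono Ioc_subset_Iic_self
  have hg₂ : EqOn g g₂ (Ioc r t) := fun τ hτ => piecewise_eq_of_notMem _ _ _ hτ.1.not_ge
  have hAC : IsAC ζ g s t :=
    ((h₁.add_const m).congr hζ₁.symm hg₁.symm).union (h₂.congr hζ₂.symm hg₂.symm) hsr
  refine ⟨ζ, g, hAC, ?_, hζ₂ ⟨hrt, le_rfl⟩, ?_⟩
  · rw [hζ₁ ⟨le_rfl, hsr⟩, projT_add, hm, add_zero]
  · rw [action_split F b hAC hsr hrt,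
      action_congr F b hsr (hζ₁.mono Ico_subset_Icc_self) hg₁, action_add_const F b hm,
      action_congr F b hrt (hζ₂.mono Ico_subset_Icc_self) hg₂]

lemma bddBelow_action (hF : ∀ j, BddAbove (range (F j))) (hst : s ≤ t) :
    BddBelow {a | ∃ ζ g : ℝ → V d, IsAC ζ g s t ∧ action F b ζ g s t = a} := by
  choose M hM using hF
  refine ⟨-((t - s) * (‖b‖ ^ 2 / 2)) - ∑ j ∈ Finset.Ico ⌈s⌉ ⌈t⌉, M j, ?_⟩
  rintro _ ⟨ζ, g, h, rfl⟩
  have hint : IntegrableOn (fun τ => (1 : ℝ) / 2 * ‖g τ‖ ^ 2 - inner ℝ b (g τ)) (Icc s t) :=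
    (h.2.1.const_mul _).sub (h.1.const_inner b)
  have hkin : -((t - s) * (‖b‖ ^ 2 / 2)) ≤
      ∫ τ in s..t, (1 : ℝ) / 2 * ‖g τ‖ ^ 2 - inner ℝ b (g τ) := by
    have := intervalIntegral.integral_mono_on (f := fun _ => -(‖b‖ ^ 2 / 2)) hst
      intervalIntegrable_const
      (hint.intervalIntegrable_of_mem_Icc ⟨le_rfl, hst⟩ ⟨hst, le_rfl⟩) fun τ _ => by
        nlinarith [real_inner_le_norm b (g τ), sq_nonneg (‖g τ‖ - ‖b‖)]
    rwa [intervalIntegral.integral_const, smul_eq_mul, ← neg_mul_eq_mul_neg] at this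
  have hpot : ∑ j ∈ Finset.Ico ⌈s⌉ ⌈t⌉, F j (projT (ζ j)) ≤ ∑ j ∈ Finset.Ico ⌈s⌉ ⌈t⌉, M j :=
    Finset.sum_le_sum fun j _ => hM j (mem_range_self _)
  rw [action]
  linarith

lemma actFn_le_action (hF : ∀ j, BddAbove (range (F j))) (hst : s ≤ t) (h : IsAC ζ g s t) :
    actFn F b s t (projT (ζ s)) (projT (ζ t)) ≤ action F b ζ g s t := by
  refine csInf_le ((bddBelow_action F b hF hst).mono ?_) ⟨ζ, g, h, rfl, rfl, rfl⟩
  rintro _ ⟨ζ, g, h, -, -, ha⟩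
  exact ⟨ζ, g, h, ha⟩

/-- Straight segments between lifts of the endpoints are admissible curves. -/
lemma actFn_set_nonempty (hst : s < t) (x x' : Torus d) :
    {a | ∃ ζ g : ℝ → V d, IsAC ζ g s t ∧ projT (ζ s) = x ∧ projT (ζ t) = x' ∧
      action F b ζ g s t = a}.Nonempty := by
  obtain ⟨y, rfl⟩ := isOpenQuotientMap_projT.surjective x
  obtain ⟨y', rfl⟩ := isOpenQuotientMap_projT.surjective x'
  set v : V d := (t - s)⁻¹ • (y' - y)
  have hv : (t - s) • v = y' - y := by
    rw [smul_smul, mul_inv_cancel₀ (sub_ne_zero.2 hst.ne'), one_smul]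
  refine ⟨_, fun τ => y + (τ - s) • v, fun _ => v, ⟨integrableOn_const measure_Icc_lt_top.ne,
    integrableOn_const measure_Icc_lt_top.ne, fun τ _ => by simp⟩, by simp, ?_, rfl⟩
  change projT (y + (t - s) • v) = projT y'
  rw [hv, add_sub_cancel]

lemma exists_forall_le_actFn (hF : ∀ j, BddAbove (range (F j))) (hst : s < t) :
    ∃ L, ∀ x x', L ≤ actFn F b s t x x' := by
  obtain ⟨L, hL⟩ := bddBelow_action F b hF hst.le
  exact ⟨L, fun x x' => le_csInf (actFn_set_nonempty F b hst x x')
    fun _ ⟨ζ, g, h, _, _, ha⟩ => hL ⟨ζ, g, h, ha⟩⟩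

end Action

section LaxOleinik

variable {F : ℤ → Torus d → ℝ} {φ : Torus d → ℝ} {ζ g : ℝ → V d} {s r t : ℝ}

lemma KOp_self (F : ℤ → Torus d → ℝ) (b : V d) (s : ℝ) (φ : Torus d → ℝ) :
    KOp F b s s φ = φ :=
  if_neg (lt_irrefl s)

lemma KOp_of_lt {b : V d} (hst : s < t) :
    KOp F b s t φ = fun x => sInf {a | ∃ y, a = φ y + actFn F b s t y x} :=
  if_pos hst

variable (b : V d)

lemma KOp_le_add_actFn (hF : ∀ j, BddAbove (range (F j))) (hφ : BddBelow (range φ))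
    (hst : s < t) (x y : Torus d) : KOp F b s t φ x ≤ φ y + actFn F b s t y x := by
  obtain ⟨L, hL⟩ := exists_forall_le_actFn F b hF hst
  obtain ⟨C, hC⟩ := hφ
  rw [KOp_of_lt hst]
  refine csInf_le ⟨C + L, ?_⟩ ⟨y, rfl⟩
  rintro _ ⟨y', rfl⟩
  exact add_le_add (hC (mem_range_self y')) (hL y' x)

lemma KOp_le_add_action (hF : ∀ j, BddAbove (range (F j))) (hφ : BddBelow (range φ))
    (hst : s ≤ t) (h : IsAC ζ g s t) :
    KOp F b s t φ (projT (ζ t)) ≤ φ (projT (ζ s)) + action F b ζ g s t := by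
  rcases hst.lt_or_eq with hst | rfl
  · exact (KOp_le_add_actFn b hF hφ hst _ _).trans
      (add_le_add_right (actFn_le_action F b hF hst.le h) _)
  · simp [KOp_self, action]

/-- The semigroup inequality `K_{s,t} ≤ K_{r,t} ∘ K_{s,r}`, tested along one curve on `[r,t]`. -/
lemma KOp_le_KOp_add_action (hF : ∀ j, BddAbove (range (F j))) (hφ : BddBelow (range φ))
    (hsr : s ≤ r) (hrt : r ≤ t) (h : IsAC ζ g r t) :
    KOp F b s t φ (projT (ζ t)) ≤ KOp F b s r φ (projT (ζ r)) + action F b ζ g r t := by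
  rcases hsr.eq_or_lt with rfl | hsr
  · rw [KOp_self]
    exact KOp_le_add_action b hF hφ hrt h
  rw [KOp_of_lt hsr, ← sub_le_iff_le_add]
  refine le_csInf ⟨_, 0, rfl⟩ ?_
  rintro _ ⟨y, rfl⟩
  rw [sub_le_iff_le_add, add_assoc, ← sub_le_iff_le_add', ← sub_le_iff_le_add]
  refine le_csInf (actFn_set_nonempty F b hsr y _) ?_
  rintro _ ⟨ζ₁, g₁, h₁, rfl, hr, rfl⟩
  obtain ⟨ζ', g', h', hs', ht', hact⟩ := exists_concat_of_projT_eq F b hsr.le hrt h₁ h hr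
  have := KOp_le_add_action b hF hφ (hsr.le.trans hrt) h'
  rw [hs', ht', hact] at this
  linarith

lemma sub_action_le_KChk (hF : ∀ j, BddAbove (range (F j))) {ψ : Torus d → ℝ}
    (hψ : BddAbove (range ψ)) (hst : s < t) (h : IsAC ζ g s t) :
    ψ (projT (ζ t)) - action F b ζ g s t ≤ KChk F b s t ψ (projT (ζ s)) := by
  obtain ⟨L, hL⟩ := exists_forall_le_actFn F b hF hst
  obtain ⟨C, hC⟩ := hψ
  have hbdd : BddAbove {a | ∃ y, a = ψ y - actFn F b s t (projT (ζ s)) y} := by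
    refine ⟨C - L, ?_⟩
    rintro _ ⟨y, rfl⟩
    exact sub_le_sub (hC (mem_range_self y)) (hL _ y)
  rw [KChk, if_pos hst]
  exact (sub_le_sub_left (actFn_le_action F b hF hst.le h) _).trans (le_csSup hbdd ⟨_, rfl⟩)

end LaxOleinik

theorem statement8 {d : ℕ} (F : ℤ → Torus d → ℝ)
    (hF : ∀ j : ℤ, ContDiff ℝ 2 fun x : V d => F j (projT x)) (b : V d)
    (ψp : Torus d → ℤ → ℝ) (hψp : IsForwardSol F b ψp)
    (N : ℕ) (φ : Torus d → ℝ) (hφ : Continuous φ)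
    (ζ g : ℝ → V d) (hmin : IsMinimizer F b (-(N : ℤ)) 0 φ ζ g) :
    ∀ j k : ℤ, -(N : ℤ) ≤ j → j < k → k ≤ 0 →
      KOp F b (-(N : ℝ)) j φ (projT (ζ (j : ℝ))) - ψp (projT (ζ (j : ℝ))) j ≤
        KOp F b (-(N : ℝ)) k φ (projT (ζ (k : ℝ))) - ψp (projT (ζ (k : ℝ))) k := by
  intro j k hj hjk hk
  obtain ⟨hAC, hval⟩ := hmin
  push_cast at hAC hval
  have hj' : -(N : ℝ) ≤ j := by exact_mod_cast hj
  have hjk' : (j : ℝ) < k := by exact_mod_cast hjk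
  have hk' : (k : ℝ) ≤ 0 := by exact_mod_cast hk
  have hFb : ∀ i, BddAbove (range (F i)) := fun i =>
    bddAbove_range_of_continuous_comp_projT (hF i).continuous
  have hφb : BddBelow (range φ) := (isCompact_range hφ).bddBelow
  have hK_j := KOp_le_add_action b hFb hφb hj' (hAC.mono le_rfl (hjk'.le.trans hk'))
  have hK_k := KOp_le_KOp_add_action b hFb hφb (hj'.trans hjk'.le) hk' (hAC.mono
    (hj'.trans hjk'.le) le_rfl)
  have hψ := sub_action_le_KChk b hFb (isCompact_range (hψp.1 k)).bddAbove hjk'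
    (hAC.mono hj' hk')
  rw [hψp.2 j k hjk] at hψ
  have hsplit := action_split F b hAC hj' (hjk'.le.trans hk')
  rw [action_split F b (hAC.mono hj' le_rfl) hjk'.le hk'] at hsplit
  linarith
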